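/- Let λ: ℤ → ℂ be positive definite with λ(0)=1. Then there exists a probability measure μ on the circle 𝕋 = ℝ/ℤ such that λ(n) = ∫_𝕋 exp(2πi n t) dμ(t) for all n ∈ ℤ. -/

import Mathlib

/-!
Positive definiteness makes the Fejér means
`σ_N(t) = N⁻¹ ∑_{j,l<N} λ(j - l) e(-jt) conj (e(-lt))` nonnegative, so `σ_N(t) dt` is a
probability measure on the circle whose `n`-th Fourier coefficient is `(1 - |n|/N) λ(n)`.
The space of probability measures on the compact circle is compact for the weak topology, and
any cluster point of these measures has Fourier coefficients `λ(n)`.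
-/

open Complex MeasureTheory Filter Topology AddCircle
open scoped ComplexOrder

section Fourier

variable {T : ℝ} [Fact (0 < T)]

theorem integral_fourier_haarAddCircle (m : ℤ) :
    ∫ t : AddCircle T, fourier m t ∂haarAddCircle = if m = 0 then 1 else 0 := by
  have h := congr_fun (fourierCoeff_fourier (T := T) m) 0
  simp only [fourierCoeff, neg_zero, fourier_zero, one_smul] at h
  rw [h, Pi.single_apply]
  exact if_congr eq_comm rfl rfl

theorem integrable_fourier_haarAddCircle (m : ℤ) :
    Integrable (fun t : AddCircle T => fourier m t) haarAddCircle :=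
  (map_continuous _).integrable_of_hasCompactSupport (HasCompactSupport.of_compactSpace _)

end Fourier

theorem card_filter_fin_sub_eq (N : ℕ) (n : ℤ) :
    (Finset.univ.filter fun p : Fin N × Fin N => (p.1 : ℤ) - p.2 = n).card = N - n.natAbs := by
  rw [← Finset.card_range (N - n.natAbs)]
  refine Finset.card_bij' (fun p _ => min (p.1 : ℕ) p.2)
    (fun k hk => (⟨k + n.toNat, by simp at hk; omega⟩, ⟨k + (-n).toNat, by simp at hk; omega⟩))
    ?_ ?_ ?_ ?_
  · intro p hp
    simp only [Finset.mem_filter, Finset.mem_univ, true_and] at hp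
    simp only [Finset.mem_range]
    omega
  · intro k hk
    simp only [Finset.mem_filter, Finset.mem_univ, true_and]
    omega
  · intro p hp
    simp only [Finset.mem_filter, Finset.mem_univ, true_and] at hp
    ext <;> simp <;> omega
  · intro k hk
    simp only [Finset.mem_range] at hk
    simp
    omega

theorem sum_sum_ite_fin_sub_eq {M : Type*} [AddCommMonoid M] (N : ℕ) (n : ℤ) (f : ℤ → M) :
    ∑ j : Fin N, ∑ l : Fin N, (if (j : ℤ) - l = n then f (j - l) else 0)
      = (N - n.natAbs) • f n := by
  have hcongr : ∀ j l : Fin N, (if (j : ℤ) - l = n then f (j - l) else 0)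
      = if (j : ℤ) - l = n then f n else 0 := fun j l => by split_ifs with h <;> simp [h]
  simp only [hcongr]
  rw [← card_filter_fin_sub_eq, Finset.card_eq_sum_ones, Finset.sum_smul, Finset.sum_filter,
    ← Finset.univ_product_univ, Finset.sum_product]
  simp only [one_smul]

theorem tendsto_natCast_sub_div_self (k : ℕ) :
    Tendsto (fun N : ℕ => ((N - k : ℕ) / N : ℂ)) atTop (𝓝 1) := by
  have h : Tendsto (fun N : ℕ => 1 - (k : ℂ) * (N : ℂ)⁻¹) atTop (𝓝 (1 - k * 0)) :=
    tendsto_const_nhds.sub (tendsto_inv_atTop_nhds_zero_nat.const_mul _)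
  rw [mul_zero, sub_zero] at h
  refine h.congr' ?_
  filter_upwards [eventually_ge_atTop (max k 1)] with N hN
  have hN0 : (N : ℂ) ≠ 0 := Nat.cast_ne_zero.mpr (by omega)
  rw [Nat.cast_sub (le_of_max_le_left hN)]
  field_simp

theorem MeasureTheory.ProbabilityMeasure.exists_integral_eq_of_tendsto {X ι : Type*}
    [TopologicalSpace X] [CompactSpace X] [T2Space X] [MeasurableSpace X] [BorelSpace X]
    {l : Filter ι} [l.NeBot] (μs : ι → ProbabilityMeasure X) :
    ∃ μ : ProbabilityMeasure X, ∀ (f : C(X, ℂ)) (c : ℂ),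
      Tendsto (fun i => ∫ x, f x ∂(μs i : Measure X)) l (𝓝 c) → ∫ x, f x ∂(μ : Measure X) = c := by
  set U := (Ultrafilter.of l).map μs
  refine ⟨U.lim, fun f c hc => ?_⟩
  have hlim := (tendsto_iff_forall_integral_rclike_tendsto ℂ).mp U.le_nhds_lim (.mkOfCompact f)
  exact tendsto_nhds_unique hlim (hc.mono_left (Ultrafilter.of_le l))

def IsPositiveDefinite (lam : ℤ → ℂ) : Prop :=
  ∀ (K : ℕ) (n : Fin K → ℤ) (c : Fin K → ℂ),
    0 ≤ ∑ j, ∑ l, lam (n j - n l) * c j * star (c l)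

section Fejer

variable {T : ℝ} {lam : ℤ → ℂ}

variable (T) in
/-- Expanded, this is `∑_{|n|<N} (1 - |n|/N) λ(n) e(-nt)`, the Fejér mean of `∑ λ(n) e(-nt)`. -/
noncomputable def fejerMean (lam : ℤ → ℂ) (N : ℕ) (t : AddCircle T) : ℂ :=
  (N : ℂ)⁻¹ * ∑ j : Fin N, ∑ l : Fin N, lam (j - l) * fourier (-j) t * star (fourier (-l) t)

theorem fejerMean_nonneg (hpd : IsPositiveDefinite lam) (N : ℕ) (t : AddCircle T) :
    0 ≤ fejerMean T lam N t :=
  mul_nonneg (by simp) (hpd N (fun j => j) fun j => fourier (-j) t)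

theorem continuous_fejerMean (lam : ℤ → ℂ) (N : ℕ) : Continuous (fejerMean T lam N) := by
  unfold fejerMean
  fun_prop

variable [Fact (0 < T)]

theorem integral_fourier_mul_fejerMean (lam : ℤ → ℂ) (N : ℕ) (n : ℤ) :
    ∫ t, fourier n t * fejerMean T lam N t ∂haarAddCircle
      = ((N - n.natAbs : ℕ) / N : ℂ) * lam n := by
  have hterm : ∀ (j l : Fin N) (t : AddCircle T),
      fourier n t * (lam (j - l) * fourier (-j) t * star (fourier (-l) t))
        = lam (j - l) * fourier (n - (j - l)) t := by
    intro j l t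
    rw [star_def, ← fourier_neg, neg_neg, show n - (j - l) = n + -j + l by ring,
      fourier_add, fourier_add]
    ring
  have hpoint : ∀ t, fourier n t * fejerMean T lam N t
      = (N : ℂ)⁻¹ * ∑ j : Fin N, ∑ l : Fin N, lam (j - l) * fourier (n - (j - l)) t := by
    intro t
    rw [fejerMean, mul_left_comm, Finset.mul_sum]
    simp only [Finset.mul_sum, hterm]
  have hint : ∀ (j l : Fin N), Integrable
      (fun t : AddCircle T => lam (j - l) * fourier (n - (j - l)) t) haarAddCircle :=
    fun j l => (integrable_fourier_haarAddCircle _).const_mul _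
  simp only [hpoint, integral_const_mul]
  rw [integral_finsetSum _ fun j _ => integrable_finsetSum _ fun l _ => hint j l]
  simp only [integral_finsetSum _ fun l _ => hint _ l, integral_const_mul,
    integral_fourier_haarAddCircle, sub_eq_zero, eq_comm (a := n), mul_ite, mul_one, mul_zero]
  rw [sum_sum_ite_fin_sub_eq, nsmul_eq_mul]
  ring

variable (T) in
noncomputable def fejerMeasure (lam : ℤ → ℂ) (N : ℕ) : Measure (AddCircle T) :=
  haarAddCircle.withDensity fun t => ENNReal.ofReal (fejerMean T lam N t).re

theorem integral_fejerMeasure (hpd : IsPositiveDefinite lam) (N : ℕ) (g : AddCircle T → ℂ) :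
    ∫ t, g t ∂fejerMeasure T lam N = ∫ t, g t * fejerMean T lam N t ∂haarAddCircle := by
  have hmeas : Measurable fun t => (fejerMean T lam N t).re.toNNReal :=
    (continuous_real_toNNReal.comp (continuous_re.comp (continuous_fejerMean lam N))).measurable
  refine (integral_withDensity_eq_integral_smul hmeas g).trans (integral_congr_ae ?_)
  refine .of_forall fun t => ?_
  have hreal : ((fejerMean T lam N t).re : ℂ) = fejerMean T lam N t :=
    (eq_re_of_ofReal_le (r := 0) (by simpa using fejerMean_nonneg hpd N t)).symm
  dsimp only
  rw [NNReal.smul_def, Real.coe_toNNReal _ (by simpa using (fejerMean_nonneg hpd N t).1),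
    real_smul, hreal, mul_comm]

theorem integral_fourier_fejerMeasure (hpd : IsPositiveDefinite lam) (N : ℕ) (n : ℤ) :
    ∫ t, fourier n t ∂fejerMeasure T lam N = ((N - n.natAbs : ℕ) / N : ℂ) * lam n := by
  rw [integral_fejerMeasure hpd, integral_fourier_mul_fejerMean]

theorem isProbabilityMeasure_fejerMeasure (hpd : IsPositiveDefinite lam) (h0 : lam 0 = 1)
    {N : ℕ} (hN : N ≠ 0) : IsProbabilityMeasure (fejerMeasure T lam N) := by
  have h := integral_fourier_fejerMeasure (T := T) hpd N 0
  simp only [fourier_zero, integral_const, mul_one, h0, Int.natAbs_zero, Nat.sub_zero,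
    div_self (Nat.cast_ne_zero.mpr hN : (N : ℂ) ≠ 0), real_smul, ofReal_eq_one] at h
  exact ⟨(ENNReal.toReal_eq_one_iff _).mp h⟩

end Fejer

/-- Bochner–Herglotz theorem for ℤ: a positive definite function `λ : ℤ → ℂ` with
`λ(0) = 1` is the Fourier transform of a probability measure on the circle 𝕋 = ℝ/ℤ. -/
theorem herglotz_int (lam : ℤ → ℂ)
    (hpd : ∀ (K : ℕ) (n : Fin K → ℤ) (c : Fin K → ℂ),
      0 ≤ ∑ j, ∑ l, lam (n j - n l) * c j * star (c l))
    (h0 : lam 0 = 1) :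
    ∃ μ : Measure (AddCircle (1 : ℝ)), IsProbabilityMeasure μ ∧
      ∀ n : ℤ, lam n = ∫ t : AddCircle (1 : ℝ), fourier n t ∂μ := by
  let ν : ℕ → ProbabilityMeasure (AddCircle (1 : ℝ)) := fun N =>
    ⟨fejerMeasure 1 lam (N + 1), isProbabilityMeasure_fejerMeasure hpd h0 N.succ_ne_zero⟩
  obtain ⟨μ, hμ⟩ := ProbabilityMeasure.exists_integral_eq_of_tendsto (l := atTop) ν
  refine ⟨μ, inferInstance, fun n => (hμ (fourier n) (lam n) ?_).symm⟩
  have hcoeff := ((tendsto_natCast_sub_div_self n.natAbs).comp (tendsto_add_atTop_nat 1)).mul_const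
    (lam n)
  rw [one_mul] at hcoeff
  exact hcoeff.congr fun N => (integral_fourier_fejerMeasure hpd (N + 1) n).symm
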